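/- Let M be a locally compact, separable metric space and M_Δ its one-point compactification. Let N be a countable dense subset of M and for each x ∈ N and each positive rational q with 2q less than the diameter of M, let φ_{q,x} : M → ℝ be a continuous function with compact support satisfying φ_{q,x} = 1 on the open ball B_q(x), φ_{q,x} = 0 outside B_{2q}(x), and 0 < φ_{q,x} < 1 on B_{2q}(x) \ B_q(x). If c : [0,∞) → M is a map such that for every such φ_{q,x} the limit lim_{t→∞} φ_{q,x}(c(t)) exists in ℝ, then lim_{t→∞} c(t) exists in M_Δ. -/
import Mathlib


open Filter Topology Metric

private lemma aux_second_clusterPt {X : Type*} [TopologicalSpace X] [CompactSpace X]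
    [RegularSpace X] (F : Filter X) [F.NeBot] (a : X) (h : ¬ F ≤ 𝓝 a) :
    ∃ b, b ≠ a ∧ ClusterPt b F := by
  obtain ⟨U, hU, hUF⟩ : ∃ U ∈ 𝓝 a, U ∉ F := by
    by_contra h'
    push_neg at h'
    exact h fun U hU => h' U hU
  obtain ⟨C, hCa, hCc, hCU⟩ := exists_mem_nhds_isClosed_subset hU
  have hCF : C ∉ F := fun hC => hUF (Filter.mem_of_superset hC hCU)
  have hG : (F ⊓ 𝓟 Cᶜ).NeBot := by
    rw [Filter.inf_principal_neBot_iff]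
    intro V hV
    rcases Set.eq_empty_or_nonempty (V ∩ Cᶜ) with he | hne
    · exact absurd (Filter.mem_of_superset hV
        (fun x hx => by_contra fun hxC => Set.eq_empty_iff_forall_notMem.1 he x ⟨hx, hxC⟩))
        hCF
    · exact hne
  obtain ⟨b, hb⟩ := exists_clusterPt_of_compactSpace (F ⊓ 𝓟 Cᶜ)
  refine ⟨b, ?_, hb.mono inf_le_left⟩
  have hbC : b ∈ closure Cᶜ := mem_closure_iff_clusterPt.2 (hb.mono inf_le_right)
  have haC : a ∈ interior C := mem_interior_iff_mem_nhds.2 hCa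
  rw [closure_compl] at hbC
  exact fun hba => hbC (hba ▸ haC)

private lemma aux_key {M : Type*} [MetricSpace M] [LocallyCompactSpace M]
    (N : Set M) (hNd : Dense N)
    (φ : M → ℚ → M → ℝ)
    (hφ : ∀ x ∈ N, ∀ q : ℚ, 0 < q →
      ENNReal.ofReal (2 * (q : ℝ)) < EMetric.diam (Set.univ : Set M) →
      Continuous (φ x q) ∧ HasCompactSupport (φ x q) ∧
      (∀ y ∈ ball x (q : ℝ), φ x q y = 1) ∧
      (∀ y ∉ ball x (2 * (q : ℝ)), φ x q y = 0) ∧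
      (∀ y ∈ ball x (2 * (q : ℝ)) \ ball x (q : ℝ), 0 < φ x q y ∧ φ x q y < 1))
    (c : ℝ → M)
    (hc : ∀ x ∈ N, ∀ q : ℚ, 0 < q →
      ENNReal.ofReal (2 * (q : ℝ)) < EMetric.diam (Set.univ : Set M) →
      ∃ L : ℝ, Tendsto (fun t => φ x q (c t)) atTop (𝓝 L))
    (a' : M) (b : OnePoint M) (hab : (a' : OnePoint M) ≠ b)
    (ha : ClusterPt (a' : OnePoint M) (Filter.map (fun t => (c t : OnePoint M)) atTop))
    (hb : ClusterPt b (Filter.map (fun t => (c t : OnePoint M)) atTop)) : False := by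
  set F : Filter (OnePoint M) := Filter.map (fun t => (c t : OnePoint M)) atTop with hFdef
  -- frequently-in-open-set consequence of cluster points in the coe part
  have freq_coe : ∀ (p : M) (V : Set M), IsOpen V → p ∈ V →
      ClusterPt (p : OnePoint M) F → ∃ᶠ t in atTop, c t ∈ V := by
    intro p V hVo hpV hp
    have hmem : ((↑) '' V : Set (OnePoint M)) ∈ 𝓝 (p : OnePoint M) :=
      OnePoint.isOpenMap_coe.image_mem_nhds (hVo.mem_nhds hpV)
    have := ((𝓝 (p : OnePoint M)).basis_sets.clusterPt_iff_frequently.mp hp)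
      _ hmem
    rw [hFdef, Filter.frequently_map] at this
    refine this.mono fun t ht => ?_
    obtain ⟨y, hyV, hy⟩ := ht
    rwa [OnePoint.coe_eq_coe.mp hy] at hyV
  -- Step 1: find δ and the "frequently zero" machinery
  obtain ⟨δ, hδ, hδdiam, hzero⟩ :
      ∃ δ : ℝ, 0 < δ ∧ ENNReal.ofReal δ ≤ EMetric.diam (Set.univ : Set M) ∧
        ∀ x : M, ∀ q : ℚ, 0 < (q : ℝ) → (q : ℝ) < δ / 3 → dist x a' < (q : ℝ) →
          HasCompactSupport (φ x q) →
          (∀ y ∉ ball x (2 * (q : ℝ)), φ x q y = 0) →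
          ∃ᶠ t in atTop, φ x q (c t) = 0 := by
    cases b with
    | infty =>
      -- M is not compact
      have hnc : ¬ CompactSpace M := by
        intro hcomp
        have := (OnePoint.hasBasis_nhds_infty.clusterPt_iff_frequently.mp hb)
          Set.univ ⟨isClosed_univ, isCompact_univ⟩
        rw [hFdef, Filter.frequently_map] at this
        simp only [Set.compl_univ, Set.image_empty, Set.empty_union,
          Set.mem_singleton_iff] at this
        obtain ⟨t, ht⟩ := this.exists
        exact OnePoint.coe_ne_infty (c t) ht
      have hnt : Nontrivial M := by
        by_contra hsub
        rw [not_nontrivial_iff_subsingleton] at hsub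
        have : Finite M := Finite.of_subsingleton
        exact hnc (Finite.compactSpace)
      obtain ⟨y, z, hyz⟩ := hnt
      refine ⟨dist y z, dist_pos.2 hyz, ?_, ?_⟩
      · rw [← edist_dist]
        exact EMetric.edist_le_diam_of_mem (Set.mem_univ _) (Set.mem_univ _)
      · intro x q hq0 hq3 hxa hsupp h0
        have := (OnePoint.hasBasis_nhds_infty.clusterPt_iff_frequently.mp hb)
          (tsupport (φ x q)) ⟨isClosed_tsupport _, hsupp⟩
        rw [hFdef, Filter.frequently_map] at this
        refine this.mono fun t ht => ?_
        rcases ht with ht | ht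
        · obtain ⟨w, hw, hwc⟩ := ht
          rw [OnePoint.coe_eq_coe.mp hwc] at hw
          exact image_eq_zero_of_notMem_tsupport hw
        · exact absurd ht (OnePoint.coe_ne_infty (c t))
    | coe b' =>
      have hab' : a' ≠ b' := fun h => hab (by rw [h])
      have hd : 0 < dist a' b' := dist_pos.2 hab'
      refine ⟨dist a' b', hd, ?_, ?_⟩
      · rw [← edist_dist]
        exact EMetric.edist_le_diam_of_mem (Set.mem_univ _) (Set.mem_univ _)
      · intro x q hq0 hq3 hxa hsupp h0
        set r : ℝ := dist a' b' - 3 * (q : ℝ) with hr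
        have hr0 : 0 < r := by
          rw [hr]; linarith
        have hfreq := freq_coe b' (ball b' r) isOpen_ball (mem_ball_self hr0) hb
        refine hfreq.mono fun t ht => ?_
        refine h0 _ ?_
        intro hct
        rw [mem_ball] at ht hct
        have h1 : dist a' b' ≤ dist a' x + dist x (c t) + dist (c t) b' :=
          dist_triangle4 a' x (c t) b'
        have h2 : dist a' x < (q : ℝ) := by rwa [dist_comm]
        have h3 : dist x (c t) < 2 * (q : ℝ) := by rwa [dist_comm] at hct
        have h4 : dist (c t) b' < r := ht
        rw [hr] at h4
        linarith
  -- Step 2: choose a rational q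
  obtain ⟨q, hq0, hq3⟩ : ∃ q : ℚ, (0 : ℝ) < q ∧ (q : ℝ) < δ / 3 := by
    obtain ⟨q, h1, h2⟩ := exists_rat_btwn (by positivity : (0 : ℝ) < δ / 3)
    exact ⟨q, h1, h2⟩
  have hq0' : 0 < q := by exact_mod_cast hq0
  have hqdiam : ENNReal.ofReal (2 * (q : ℝ)) < EMetric.diam (Set.univ : Set M) := by
    refine lt_of_lt_of_le ?_ hδdiam
    rw [ENNReal.ofReal_lt_ofReal_iff hδ]
    linarith
  -- Step 3: choose x ∈ N near a'
  obtain ⟨x, hxN, hxa⟩ := hNd.exists_dist_lt a' hq0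
  rw [dist_comm] at hxa
  obtain ⟨hcont, hsupp, hone, hzero', hmid⟩ := hφ x hxN q hq0' hqdiam
  obtain ⟨L, hL⟩ := hc x hxN q hq0' hqdiam
  -- Step 4: L = 1
  have hfreq1 : ∃ᶠ t in atTop, φ x q (c t) = 1 := by
    have hmem : a' ∈ ball x (q : ℝ) := by rw [mem_ball, dist_comm]; exact hxa
    exact (freq_coe a' (ball x (q : ℝ)) isOpen_ball hmem ha).mono fun t ht => hone _ ht
  have hL1 : L = 1 :=
    tendsto_nhds_unique_of_frequently_eq hL tendsto_const_nhds hfreq1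
  -- Step 5: L = 0
  have hfreq0 : ∃ᶠ t in atTop, φ x q (c t) = 0 := hzero x q hq0 hq3 hxa hsupp hzero'
  have hL0 : L = 0 :=
    tendsto_nhds_unique_of_frequently_eq hL tendsto_const_nhds hfreq0
  rw [hL1] at hL0
  norm_num at hL0

/-- Lemma 3.1: if all bump functions `φ_{q,x}` (x in a countable dense set, q positive rational
with 2q < diam M) converge along `c`, then `c` converges in the one-point compactification. -/
theorem stmt_0 {M : Type*} [MetricSpace M] [LocallyCompactSpace M]
    [TopologicalSpace.SeparableSpace M]
    (N : Set M) (hNc : N.Countable) (hNd : Dense N)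
    (φ : M → ℚ → M → ℝ)
    (hφ : ∀ x ∈ N, ∀ q : ℚ, 0 < q →
      ENNReal.ofReal (2 * (q : ℝ)) < EMetric.diam (Set.univ : Set M) →
      Continuous (φ x q) ∧ HasCompactSupport (φ x q) ∧
      (∀ y ∈ ball x (q : ℝ), φ x q y = 1) ∧
      (∀ y ∉ ball x (2 * (q : ℝ)), φ x q y = 0) ∧
      (∀ y ∈ ball x (2 * (q : ℝ)) \ ball x (q : ℝ), 0 < φ x q y ∧ φ x q y < 1))
    (c : ℝ → M)
    (hc : ∀ x ∈ N, ∀ q : ℚ, 0 < q →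
      ENNReal.ofReal (2 * (q : ℝ)) < EMetric.diam (Set.univ : Set M) →
      ∃ L : ℝ, Tendsto (fun t => φ x q (c t)) atTop (𝓝 L)) :
    ∃ L : OnePoint M, Tendsto (fun t => (c t : OnePoint M)) atTop (𝓝 L) := by
  set F : Filter (OnePoint M) := Filter.map (fun t => (c t : OnePoint M)) atTop with hFdef
  have hFne : F.NeBot := Filter.map_neBot
  by_contra hcon
  push_neg at hcon
  obtain ⟨a, ha⟩ := exists_clusterPt_of_compactSpace F
  obtain ⟨b, hba, hb⟩ := aux_second_clusterPt F a (hcon a)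
  cases a with
  | infty =>
    cases b with
    | infty => exact hba rfl
    | coe b' => exact aux_key N hNd φ hφ c hc b' OnePoint.infty hba hb ha
  | coe a' => exact aux_key N hNd φ hφ c hc a' b (fun h => hba h.symm) ha hb
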